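/- If a collection C of S-structures is exactly the collection of models of a finite set Σ of disjunctive existential rules, then C is closed under repairable direct products: for all I, J ∈ C there exists L ∈ C such that every fact of I ⊗ J is a fact of L and there is a homomorphism h : L → I extending the projection π_{I⊗J} : (a,b) ↦ a. -/

import Mathlib

/-- A relational schema: a type of relation symbols with positive arities. -/
structure Schema where
  Rel : Type
  ar : Rel → ℕ
  ar_pos : ∀ R, 0 < ar R

/-- A relational structure over a schema `S`, with domain a set of natural
numbers (the fixed countably infinite set of constants). -/
structure Str (S : Schema) where
  dom : Set ℕ
  rel : ∀ R : S.Rel, Set (Fin (S.ar R) → ℕ)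
  rel_dom : ∀ R t, t ∈ rel R → ∀ i, t i ∈ dom

/-- An atom: a relation symbol together with a tuple (of variables or constants,
both represented by naturals). -/
abbrev Atom (S : Schema) := Σ R : S.Rel, Fin (S.ar R) → ℕ

def atomVars {S : Schema} (a : Atom S) : Set ℕ := Set.range a.2

def mapAtom {S : Schema} (f : ℕ → ℕ) (a : Atom S) : Atom S := ⟨a.1, fun i => f (a.2 i)⟩

/-- The set of facts of a structure. -/
def factsSet {S : Schema} (K : Str S) : Set (Atom S) := {a | a.2 ∈ K.rel a.1}

/-- `FactsSub K I`: every fact of `K` is a fact of `I` (written `K ⊆ I`). -/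
def FactsSub {S : Schema} (K I : Str S) : Prop := ∀ R t, t ∈ K.rel R → t ∈ I.rel R

/-- The active domain: elements occurring in some fact. -/
def activeDom {S : Schema} (K : Str S) : Set ℕ := ⋃ a ∈ factsSet K, atomVars a

/-- `K` is a substructure of `I` (`K ⪯ I`). -/
def Substr {S : Schema} (K I : Str S) : Prop :=
  K.dom ⊆ I.dom ∧ ∀ R, K.rel R = {t | t ∈ I.rel R ∧ ∀ i, t i ∈ K.dom}

/-- A disjunctive existential rule: a body (possibly empty conjunction of atoms)
and a nonempty disjunction of nonempty conjunctions of atoms.  Variables are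
naturals; the universally quantified variables are those occurring in the body,
the remaining variables of each head-disjunct are existentially quantified. -/
structure Dexr (S : Schema) where
  body : List (Atom S)
  head : List (List (Atom S))
  head_nonempty : head ≠ []
  disj_nonempty : ∀ d ∈ head, d ≠ []

def bodyVars {S : Schema} (σ : Dexr S) : Set ℕ := ⋃ a ∈ σ.body, atomVars a

def disjVars {S : Schema} (d : List (Atom S)) : Set ℕ := ⋃ a ∈ d, atomVars a

def holdsAtom {S : Schema} (I : Str S) (h : ℕ → ℕ) (a : Atom S) : Prop :=
  (fun i => h (a.2 i)) ∈ I.rel a.1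

/-- Satisfaction of a disjunctive existential rule by a structure. -/
def Sat {S : Schema} (I : Str S) (σ : Dexr S) : Prop :=
  ∀ h : ℕ → ℕ, (∀ v ∈ bodyVars σ, h v ∈ I.dom) →
    (∀ a ∈ σ.body, holdsAtom I h a) →
    ∃ d ∈ σ.head, ∃ h' : ℕ → ℕ,
      (∀ v ∈ bodyVars σ, h' v = h v) ∧ ∀ a ∈ d, holdsAtom I h' a

/-- A `κ`-critical structure: the domain has exactly `κ` elements and every
relation is interpreted as the full relation over the domain. -/
def IsCritical {S : Schema} (I : Str S) (κ : ℕ) : Prop :=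
  I.dom.Finite ∧ I.dom.ncard = κ ∧ ∀ R, I.rel R = {t | ∀ i, t i ∈ I.dom}

/-- The direct product `I ⊗ J`, with domain coded by the `Nat.pair` bijection
between `ℕ × ℕ` and `ℕ`. -/
def prodStr {S : Schema} (I J : Str S) : Str S where
  dom := {c | c.unpair.1 ∈ I.dom ∧ c.unpair.2 ∈ J.dom}
  rel R := {t | (fun i => (t i).unpair.1) ∈ I.rel R ∧ (fun i => (t i).unpair.2) ∈ J.rel R}
  rel_dom := fun R t ht i => ⟨I.rel_dom R _ ht.1 i, J.rel_dom R _ ht.2 i⟩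

/-- Homomorphism between structures. -/
def IsHom {S : Schema} (I J : Str S) (h : ℕ → ℕ) : Prop :=
  (∀ c ∈ I.dom, h c ∈ J.dom) ∧ ∀ R t, t ∈ I.rel R → (fun i => h (t i)) ∈ J.rel R

/-- `L` is a repairable direct product of `I` and `J`. -/
def RepairableDP {S : Schema} (I J L : Str S) : Prop :=
  FactsSub (prodStr I J) L ∧
    ∃ h : ℕ → ℕ, (∀ c ∈ (prodStr I J).dom, h c = c.unpair.1) ∧ IsHom L I h

/-- Atoms with constants (from `ℕ`) and at most `m` variables. -/
abbrev CAtom (S : Schema) (m : ℕ) := Σ R : S.Rel, Fin (S.ar R) → (ℕ ⊕ Fin m)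

/-- A conjunction of such atoms. -/
abbrev Conj (S : Schema) (m : ℕ) := List (CAtom S m)

def conjConsts {S : Schema} {m : ℕ} (γ : Conj S m) : Set ℕ :=
  {c | ∃ a ∈ γ, ∃ i, a.2 i = Sum.inl c}

/-- `J ⊨ ∃ȳ γ(ȳ)` where constants are interpreted via `ι`. -/
def satConjEx {S : Schema} {m : ℕ} (J : Str S) (ι : ℕ → ℕ) (γ : Conj S m) : Prop :=
  ∃ v : Fin m → ℕ, (∀ j, v j ∈ J.dom) ∧
    ∀ a ∈ γ, (fun i => Sum.elim ι v (a.2 i)) ∈ J.rel a.1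

/-- Membership in `N^I_{K,m}`: a conjunction over constants of `dom K` that is
not satisfiable in `I` (constants interpreted as themselves). -/
def InNeg {S : Schema} {m : ℕ} (I K : Str S) (γ : Conj S m) : Prop :=
  conjConsts γ ⊆ K.dom ∧ ¬ satConjEx I id γ

/-- `J` satisfies the diagram `Δ^I_{K,G}` under the interpretation `ι` of the
constants of `dom K`. -/
def SatDiagWith {S : Schema} {m : ℕ} (J K : Str S) (G : Set (Conj S m)) (ι : ℕ → ℕ) : Prop :=
  (∀ c ∈ K.dom, ι c ∈ J.dom) ∧
  (∀ R t, t ∈ K.rel R → (fun i => ι (t i)) ∈ J.rel R) ∧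
  Set.InjOn ι K.dom ∧
  ∀ γ ∈ G, ¬ satConjEx J ι γ

/-- `J` satisfies the diagram `Δ^I_{K,G}` (up to interpretation of constants,
i.e. up to isomorphic renaming). -/
def SatDiag {S : Schema} {m : ℕ} (J K : Str S) (G : Set (Conj S m)) : Prop :=
  ∃ ι : ℕ → ℕ, SatDiagWith J K G ι

/-- `C` is diagrammatically `(n,m,ℓ)`-compatible with `I`. -/
def DiagCompatWith {S : Schema} (C : Set (Str S)) (I : Str S) (n m ℓ : ℕ) : Prop :=
  ∀ K : Str S, Substr K I → K.dom = activeDom K → K.dom.Finite → K.dom.ncard ≤ n →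
    ∀ G : Set (Conj S m), (∀ γ ∈ G, InNeg I K γ) → G.Finite → G.ncard ≤ ℓ →
      ∃ J ∈ C, SatDiag J K G

/-- `C` is diagrammatically `(n,m,ℓ)`-compatible. -/
def DiagCompat {S : Schema} (C : Set (Str S)) (n m ℓ : ℕ) : Prop :=
  ∀ I : Str S, DiagCompatWith C I n m ℓ → I ∈ C

/-- A linear structure: at most one fact. -/
def IsLinearStr {S : Schema} (K : Str S) : Prop := (factsSet K).Subsingleton

/-- A guarded structure. -/
def IsGuardedStr {S : Schema} (K : Str S) : Prop :=
  factsSet K = ∅ ∨ ∃ a ∈ factsSet K, activeDom K = atomVars a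

/-- `C` is linear-diagrammatically `(n,m,ℓ)`-compatible with `I`. -/
def LinDiagCompatWith {S : Schema} (C : Set (Str S)) (I : Str S) (n m ℓ : ℕ) : Prop :=
  ∀ K : Str S, FactsSub K I → IsLinearStr K → K.dom = activeDom K →
    K.dom.Finite → K.dom.ncard ≤ n →
    ∀ G : Set (Conj S m), (∀ γ ∈ G, InNeg I K γ) → G.Finite → G.ncard ≤ ℓ →
      ∃ J ∈ C, SatDiag J K G

def LinDiagCompat {S : Schema} (C : Set (Str S)) (n m ℓ : ℕ) : Prop :=
  ∀ I : Str S, LinDiagCompatWith C I n m ℓ → I ∈ C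

/-- `C` is guarded-diagrammatically `(n,m,ℓ)`-compatible with `I`. -/
def GuardedDiagCompatWith {S : Schema} (C : Set (Str S)) (I : Str S) (n m ℓ : ℕ) : Prop :=
  ∀ K : Str S, Substr K I → IsGuardedStr K → K.dom = activeDom K →
    K.dom.Finite → K.dom.ncard ≤ n →
    ∀ G : Set (Conj S m), (∀ γ ∈ G, InNeg I K γ) → G.Finite → G.ncard ≤ ℓ →
      ∃ J ∈ C, SatDiag J K G

def GuardedDiagCompat {S : Schema} (C : Set (Str S)) (n m ℓ : ℕ) : Prop :=
  ∀ I : Str S, GuardedDiagCompatWith C I n m ℓ → I ∈ C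

/-- A linear rule: at most one body atom. -/
def IsLinearRule {S : Schema} (σ : Dexr S) : Prop := σ.body.length ≤ 1

/-- Union of a list of structures. -/
def unionStr {S : Schema} (Js : List (Str S)) : Str S where
  dom := ⋃ J ∈ Js, J.dom
  rel R := ⋃ J ∈ Js, J.rel R
  rel_dom := by
    intro R t ht i
    simp only [Set.mem_iUnion] at ht ⊢
    obtain ⟨J, hJ, htJ⟩ := ht
    exact ⟨J, hJ, J.rel_dom R t htJ i⟩

/-- Logical entailment of a rule from a finite set of rules. -/
def Entails {S : Schema} (T : List (Dexr S)) (σ : Dexr S) : Prop :=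
  ∀ I : Str S, (∀ τ ∈ T, Sat I τ) → Sat I σ

/-- Add a set of facts to a structure. -/
def addFacts {S : Schema} (I : Str S) (F : Set (Atom S)) : Str S where
  dom := I.dom ∪ ⋃ a ∈ F, atomVars a
  rel R := I.rel R ∪ {t | (⟨R, t⟩ : Atom S) ∈ F}
  rel_dom := by
    intro R t ht i
    rcases ht with ht | ht
    · exact Or.inl (I.rel_dom R t ht i)
    · exact Or.inr (Set.mem_biUnion ht ⟨i, rfl⟩)

/-- A trigger `(σ, h)` for a rule on a structure. -/
def IsTrigger {S : Schema} (I : Str S) (σ : Dexr S) (h : ℕ → ℕ) : Prop :=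
  (∀ v ∈ bodyVars σ, h v ∈ I.dom) ∧ ∀ a ∈ σ.body, holdsAtom I h a

/-- An active trigger: a trigger witnessing a violation of the rule. -/
def ActiveTrigger {S : Schema} (I : Str S) (σ : Dexr S) (h : ℕ → ℕ) : Prop :=
  IsTrigger I σ h ∧
    ¬ ∃ d ∈ σ.head, ∃ h' : ℕ → ℕ,
        (∀ v ∈ bodyVars σ, h' v = h v) ∧ ∀ a ∈ d, holdsAtom I h' a

/-- The structure obtained from `I` by adding the facts of the head-disjunct `d`
instantiated via `h'`. -/
def applyDisj {S : Schema} (I : Str S) (d : List (Atom S)) (h' : ℕ → ℕ) : Str S :=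
  addFacts I {a | ∃ b ∈ d, a = mapAtom h' b}



/-!
The repair is `L = I ⊗ F`, where `F` is the structure on `dom J` in which every relation is full.
It contains `I ⊗ J`, and the first projection is a homomorphism `L → I`. If `dom J` is nonempty,
`L` satisfies every rule that `I` satisfies: a trigger in `L` projects to a trigger in `I`, and
the witnesses that `I` provides for the existential variables are paired with a fixed element
of `dom J`, which `F` accepts in every position. If `dom J` is empty, `J` has no facts and
`L = J` already works.
-/

variable {S : Schema}

def fullStr (S : Schema) (D : Set ℕ) : Str S where
  dom := D
  rel _ := {t | ∀ i, t i ∈ D}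
  rel_dom := fun _ _ ht => ht

lemma factsSub_fullStr (J : Str S) : FactsSub J (fullStr S J.dom) :=
  J.rel_dom

lemma factsSub_prodStr_right {I J K : Str S} (h : FactsSub J K) :
    FactsSub (prodStr I J) (prodStr I K) :=
  fun R _ ht => ⟨ht.1, h R _ ht.2⟩

lemma isHom_prodStr_fst (I J : Str S) : IsHom (prodStr I J) I (fun c => c.unpair.1) :=
  ⟨fun _ hc => hc.1, fun _ _ ht => ht.1⟩

lemma repairableDP_prodStr_of_factsSub {I J K : Str S} (h : FactsSub J K) :
    RepairableDP I J (prodStr I K) :=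
  ⟨factsSub_prodStr_right h, _, fun _ _ => rfl, isHom_prodStr_fst I K⟩

lemma rel_eq_empty_of_dom_eq_empty {J : Str S} (hJ : J.dom = ∅) (R : S.Rel) : J.rel R = ∅ :=
  Set.eq_empty_of_forall_notMem fun t ht => by
    simpa [hJ] using J.rel_dom R t ht ⟨0, S.ar_pos R⟩

lemma repairableDP_self_of_dom_eq_empty (I : Str S) {J : Str S} (hJ : J.dom = ∅) :
    RepairableDP I J J := by
  refine ⟨fun R t ht => ?_, _, fun _ _ => rfl, fun c hc => ?_, fun R t ht => ?_⟩
  · simpa [rel_eq_empty_of_dom_eq_empty hJ] using ht.2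
  · simp [hJ] at hc
  · simp [rel_eq_empty_of_dom_eq_empty hJ] at ht

lemma sat_prodStr_fullStr {I : Str S} {D : Set ℕ} (hD : D.Nonempty) {σ : Dexr S}
    (hσ : Sat I σ) : Sat (prodStr I (fullStr S D)) σ := by
  classical
  obtain ⟨j₀, hj₀⟩ := hD
  intro h hdom hbody
  obtain ⟨d, hd, h', hagree, hholds⟩ :=
    hσ (fun v => (h v).unpair.1) (fun v hv => (hdom v hv).1) (fun a ha => (hbody a ha).1)
  let g : ℕ → ℕ := fun v => if v ∈ bodyVars σ then h v else Nat.pair (h' v) j₀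
  have hg_fst : ∀ v, (g v).unpair.1 = h' v := by
    intro v
    by_cases hv : v ∈ bodyVars σ
    · simp only [g, if_pos hv, hagree v hv]
    · simp only [g, if_neg hv, Nat.unpair_pair]
  have hg_snd : ∀ v, (g v).unpair.2 ∈ D := by
    intro v
    by_cases hv : v ∈ bodyVars σ
    · simp only [g, if_pos hv]
      exact (hdom v hv).2
    · simpa only [g, if_neg hv, Nat.unpair_pair] using hj₀
  refine ⟨d, hd, g, fun v hv => if_pos hv, fun a ha => ⟨?_, fun i => hg_snd _⟩⟩
  simpa only [holdsAtom, hg_fst] using hholds a ha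

theorem stmt4 (S : Schema) (C : Set (Str S)) (T : List (Dexr S))
    (hax : ∀ I : Str S, I ∈ C ↔ ∀ σ ∈ T, Sat I σ) :
    ∀ I ∈ C, ∀ J ∈ C, ∃ L ∈ C, RepairableDP I J L := by
  intro I hI J hJ
  rcases J.dom.eq_empty_or_nonempty with hJd | hJd
  · exact ⟨J, hJ, repairableDP_self_of_dom_eq_empty I hJd⟩
  · refine ⟨prodStr I (fullStr S J.dom), ?_, repairableDP_prodStr_of_factsSub (factsSub_fullStr J)⟩
    rw [hax] at hI ⊢
    exact fun σ hσ => sat_prodStr_fullStr hJd (hI σ hσ)
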